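/- For p ∈ (0,1], define Q(p) = 4(1−p)² / (4 − 2p + p²). Then Q(p) = 1 − 3p(2−p)/(4 − p(2−p)), and Q(p) ∈ [0,1) for all p ∈ (0,1]. Consequently, if local depolarizing noise with per-qubit error probability p acts in L layers on n qubits and causes cost concentration ⟨ΔC̃⟩ = A·q^L·⟨ΔC⟩ for constants A > 0 and q ∈ (0,1), then the optimal Probabilistic Error Cancellation scheme mitigating every noisy gate — whose total error mitigation cost is the nL-fold product γ_tot = (1/Q(p))^{nL} of the single-qubit costs and which corrects the noise exactly — yields average relative resolvability χ̄ = (1/(A²q^{2L}))·Q(p)^{nL}, which for fixed p ∈ (0,1] decays exponentially in n·L relative to the concentration factor; in particular the relative resolvability has unfavourable scaling with system size under noise-induced barren plateau scaling. -/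

import Mathlib

/-! The denominator `4 - 2p + p² = 3 + (1 - p)²` is positive for every real `p`, and
`4(1 - p)² < 4 - 2p + p²` reduces to `3p(p - 2) < 0`, so `Q(p) ∈ [0, 1)` on all of `(0, 2)`.
For the resolvability, `ΔC` cancels from `⟨ΔC⟩ / (A qᴸ ⟨ΔC⟩)` and `1 / γ_tot = Q(p)^{nL}`. -/

noncomputable def depolarizingPECFactor (p : ℝ) : ℝ :=
  4 * (1 - p) ^ 2 / (4 - 2 * p + p ^ 2)

def avgRelativeResolvability {K : Type*} [Field K] (γ ΔCm ΔCnoisy : K) : K :=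
  1 / γ * (ΔCm / ΔCnoisy) ^ 2

lemma depolarizingPECFactor_denom_pos (p : ℝ) : 0 < 4 - 2 * p + p ^ 2 := by
  nlinarith [sq_nonneg (1 - p)]

lemma depolarizingPECFactor_eq_one_sub (p : ℝ) :
    depolarizingPECFactor p = 1 - 3 * p * (2 - p) / (4 - p * (2 - p)) := by
  have hdenom : 4 - p * (2 - p) = 4 - 2 * p + p ^ 2 := by ring
  rw [depolarizingPECFactor, hdenom, eq_sub_iff_add_eq, ← add_div,
    div_eq_one_iff_eq (depolarizingPECFactor_denom_pos p).ne']
  ring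

lemma depolarizingPECFactor_nonneg (p : ℝ) : 0 ≤ depolarizingPECFactor p :=
  div_nonneg (by positivity) (depolarizingPECFactor_denom_pos p).le

lemma depolarizingPECFactor_lt_one {p : ℝ} (hp0 : 0 < p) (hp2 : p < 2) :
    depolarizingPECFactor p < 1 := by
  rw [depolarizingPECFactor, div_lt_one (depolarizingPECFactor_denom_pos p)]
  nlinarith

lemma avgRelativeResolvability_of_concentration {K : Type*} [Field K]
    (Q A q ΔC : K) (m L : ℕ) (hC : ΔC ≠ 0) :
    avgRelativeResolvability ((1 / Q) ^ m) ΔC (A * q ^ L * ΔC) =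
      1 / (A ^ 2 * q ^ (2 * L)) * Q ^ m := by
  rw [avgRelativeResolvability, div_mul_cancel_right₀ hC, one_div_pow, one_div_one_div,
    inv_pow, mul_pow, ← pow_mul, mul_comm L, one_div, mul_comm]

/-- **Proposition 6** (scaling of Probabilistic Error Cancellation with local
depolarizing noise). The single-qubit factor `Q(p) = 4(1-p)²/(4-2p+p²)` equals
`1 - 3p(2-p)/(4-p(2-p))` and lies in `[0,1)` for `p ∈ (0,1]`. Consequently,
under cost concentration `⟨ΔC̃⟩ = A q^L ⟨ΔC⟩`, the optimal PEC scheme mitigating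
all `nL` noisy qubit-layers, with total error mitigation cost
`γ_tot = (1/Q(p))^{nL}` and exact correction `ΔC_m = ΔC`, yields average
relative resolvability `χ̄ = (1/γ_tot)(⟨ΔC⟩/⟨ΔC̃⟩)² = (1/(A²q^{2L})) Q(p)^{nL}`. -/
theorem pec_local_depolarizing_scaling
    (p : ℝ) (hp0 : 0 < p) (hp1 : p ≤ 1) :
    4 * (1 - p) ^ 2 / (4 - 2 * p + p ^ 2) = 1 - 3 * p * (2 - p) / (4 - p * (2 - p)) ∧
    0 ≤ 4 * (1 - p) ^ 2 / (4 - 2 * p + p ^ 2) ∧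
    4 * (1 - p) ^ 2 / (4 - 2 * p + p ^ 2) < 1 ∧
    ∀ (A q : ℝ) (n L : ℕ) (ΔC : ℝ), 0 < A → 0 < q → q < 1 → ΔC ≠ 0 →
      (1 / ((1 / (4 * (1 - p) ^ 2 / (4 - 2 * p + p ^ 2))) ^ (n * L))) *
          (ΔC / (A * q ^ L * ΔC)) ^ 2 =
        (1 / (A ^ 2 * q ^ (2 * L))) * (4 * (1 - p) ^ 2 / (4 - 2 * p + p ^ 2)) ^ (n * L) :=
  ⟨depolarizingPECFactor_eq_one_sub p, depolarizingPECFactor_nonneg p,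
    depolarizingPECFactor_lt_one hp0 (by linarith),
    fun A q n L ΔC _ _ _ hC =>
      avgRelativeResolvability_of_concentration (depolarizingPECFactor p) A q ΔC (n * L) L hC⟩
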